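/- arXiv:2102.13091 — 6 statements merged into one kernel-verified Lean document; each statement's English description precedes it below -/
import Mathlib

section
/- If φ ⊢ ψ is derivable in QRC₁, x is not free in φ, and t is free for x in ψ, then φ ⊢ ψ[x/t] is derivable in QRC₁. -/
namespace QRC1

/-- Strictly positive formulas of QRC₁ over a signature with constants `Cst`,
relation symbols `Rl`, and arity function `ar`.  Terms are either variables
(natural numbers, left) or constants (right). -/
inductive Fml (Cst Rl : Type) (ar : Rl → ℕ) : Type
  | top : Fml Cst Rl ar
  | rel (S : Rl) (ts : Fin (ar S) → ℕ ⊕ Cst) : Fml Cst Rl ar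
  | and (φ ψ : Fml Cst Rl ar) : Fml Cst Rl ar
  | dia (φ : Fml Cst Rl ar) : Fml Cst Rl ar
  | all (x : ℕ) (φ : Fml Cst Rl ar) : Fml Cst Rl ar

namespace Fml

variable {Cst Rl : Type} {ar : Rl → ℕ}

/-- Free variables of a formula. -/
def fv : Fml Cst Rl ar → Set ℕ
  | .top => ∅
  | .rel _ ts => {x | ∃ i, ts i = Sum.inl x}
  | .and φ ψ => fv φ ∪ fv ψ
  | .dia φ => fv φ
  | .all y φ => fv φ \ {y}

/-- A formula is closed when it has no free variables. -/
def Closed (φ : Fml Cst Rl ar) : Prop := φ.fv = ∅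

/-- Constants occurring in a formula. -/
def consts : Fml Cst Rl ar → Set Cst
  | .top => ∅
  | .rel _ ts => {c | ∃ i, ts i = Sum.inr c}
  | .and φ ψ => consts φ ∪ consts ψ
  | .dia φ => consts φ
  | .all _ φ => consts φ

/-- Substitution of a term for a variable, on terms. -/
def substT (x : ℕ) (t : ℕ ⊕ Cst) : ℕ ⊕ Cst → ℕ ⊕ Cst
  | .inl y => if y = x then t else .inl y
  | .inr c => .inr c

/-- `φ.subst x t` replaces all free occurrences of variable `x` in `φ` by the term `t`. -/
def subst : Fml Cst Rl ar → ℕ → (ℕ ⊕ Cst) → Fml Cst Rl ar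
  | .top, _, _ => .top
  | .rel S ts, x, t => .rel S (fun i => substT x t (ts i))
  | .and φ ψ, x, t => .and (φ.subst x t) (ψ.subst x t)
  | .dia φ, x, t => .dia (φ.subst x t)
  | .all y φ, x, t => if y = x then .all y φ else .all y (φ.subst x t)

/-- `FreeFor t x φ`: the term `t` is free for the variable `x` in `φ`, i.e. no
free occurrence of a variable of `t` becomes bound in `φ[x/t]`. -/
def FreeFor (t : ℕ ⊕ Cst) (x : ℕ) : Fml Cst Rl ar → Prop
  | .top => True
  | .rel _ _ => True
  | .and φ ψ => FreeFor t x φ ∧ FreeFor t x ψ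
  | .dia φ => FreeFor t x φ
  | .all y φ => x ∉ fv (Fml.all y φ) ∨ (t ≠ .inl y ∧ FreeFor t x φ)

/-- Modal depth. -/
def mdepth : Fml Cst Rl ar → ℕ
  | .top => 0
  | .rel _ _ => 0
  | .and φ ψ => max φ.mdepth ψ.mdepth
  | .dia φ => φ.mdepth + 1
  | .all _ φ => φ.mdepth

/-- Quantifier depth. -/
def udepth : Fml Cst Rl ar → ℕ
  | .top => 0
  | .rel _ _ => 0
  | .and φ ψ => max φ.udepth ψ.udepth
  | .dia φ => φ.udepth
  | .all _ φ => φ.udepth + 1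

/-- Number of distinct constants occurring in a formula. -/
noncomputable def cdepth (φ : Fml Cst Rl ar) : ℕ := φ.consts.ncard

/-- Size of a formula (for termination purposes). -/
def size : Fml Cst Rl ar → ℕ
  | .top => 1
  | .rel _ _ => 1
  | .and φ ψ => φ.size + ψ.size + 1
  | .dia φ => φ.size + 1
  | .all _ φ => φ.size + 1

theorem size_subst (φ : Fml Cst Rl ar) (x : ℕ) (t : ℕ ⊕ Cst) :
    (φ.subst x t).size = φ.size := by
  induction φ generalizing x t with
  | top => rfl
  | rel S ts => rfl
  | and φ ψ ihφ ihψ => simp [subst, size, ihφ, ihψ]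
  | dia φ ih => simp [subst, size, ih]
  | all y φ ih => by_cases h : y = x <;> simp [subst, h, size, ih]

/-- The closure of a formula under a set of constants `C`, where the
subformulas of `∀x φ` are all `φ[x/c]` for `c ∈ C`. -/
def cl (C : Set Cst) : Fml Cst Rl ar → Set (Fml Cst Rl ar)
  | .top => {.top}
  | .rel S ts => {.rel S ts, .top}
  | .and φ ψ => {.and φ ψ} ∪ φ.cl C ∪ ψ.cl C
  | .dia φ => {.dia φ} ∪ φ.cl C
  | .all x φ => {.all x φ} ∪ ⋃ c ∈ C, (φ.subst x (.inr c)).cl C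
termination_by φ => φ.size
decreasing_by all_goals (simp [size, size_subst]; try omega)

/-- Renaming of constants along a map `f` (used for signature extensions). -/
def mapC {Cst' : Type} (f : Cst → Cst') : Fml Cst Rl ar → Fml Cst' Rl ar
  | .top => .top
  | .rel S ts => .rel S (fun i => Sum.map id f (ts i))
  | .and φ ψ => .and (φ.mapC f) (ψ.mapC f)
  | .dia φ => .dia (φ.mapC f)
  | .all x φ => .all x (φ.mapC f)

/-- Simultaneous substitution of terms for variables. -/
def msubst (σ : ℕ → ℕ ⊕ Cst) : Fml Cst Rl ar → Fml Cst Rl ar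
  | .top => .top
  | .rel S ts => .rel S (fun i => match ts i with
      | .inl x => σ x
      | .inr c => .inr c)
  | .and φ ψ => .and (φ.msubst σ) (ψ.msubst σ)
  | .dia φ => .dia (φ.msubst σ)
  | .all x φ => .all x (φ.msubst (Function.update σ x (.inl x)))

/-- `φ^g`: replace every free variable `x` of `φ` by the constant `g x`. -/
def capp (g : ℕ → Cst) (φ : Fml Cst Rl ar) : Fml Cst Rl ar :=
  φ.msubst (fun x => .inr (g x))

end Fml

/-- The derivability relation `φ ⊢ ψ` of the calculus QRC₁. -/
inductive Der {Cst Rl : Type} {ar : Rl → ℕ} : Fml Cst Rl ar → Fml Cst Rl ar → Prop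
  | top (φ) : Der φ .top
  | refl (φ) : Der φ φ
  | andE1 (φ ψ) : Der (.and φ ψ) φ
  | andE2 (φ ψ) : Der (.and φ ψ) ψ
  | andI {φ ψ χ} : Der φ ψ → Der φ χ → Der φ (.and ψ χ)
  | cut {φ ψ χ} : Der φ ψ → Der ψ χ → Der φ χ
  | diaMono {φ ψ} : Der φ ψ → Der (.dia φ) (.dia ψ)
  | diaTrans (φ) : Der (.dia (.dia φ)) (.dia φ)
  | allI {φ ψ} (x) : Der φ ψ → x ∉ φ.fv → Der φ (.all x ψ)
  | allE {φ ψ} (x) (t : ℕ ⊕ Cst) : Der (φ.subst x t) ψ → Fml.FreeFor t x φ →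
      Der (.all x φ) ψ
  | inst {φ ψ} (x) (t : ℕ ⊕ Cst) : Der φ ψ → Fml.FreeFor t x φ → Fml.FreeFor t x ψ →
      Der (φ.subst x t) (ψ.subst x t)
  | genC {φ ψ} (x) (c : Cst) : Der (φ.subst x (.inr c)) (ψ.subst x (.inr c)) →
      c ∉ φ.consts → c ∉ ψ.consts → Der φ ψ

section Depths

variable {Cst Rl : Type} {ar : Rl → ℕ}

/-- Modal depth of a set of formulas (the supremum of the modal depths). -/
noncomputable def mdepthSet (Γ : Set (Fml Cst Rl ar)) : ℕ := sSup (Fml.mdepth '' Γ)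

/-- Quantifier depth of a set of formulas. -/
noncomputable def udepthSet (Γ : Set (Fml Cst Rl ar)) : ℕ := sSup (Fml.udepth '' Γ)

/-- Maximum number of distinct constants per formula in a set of formulas. -/
noncomputable def cdepthSet (Γ : Set (Fml Cst Rl ar)) : ℕ := sSup (Fml.cdepth '' Γ)

/-- Closure of a set of formulas under a set of constants. -/
def clSet (C : Set Cst) (Γ : Set (Fml Cst Rl ar)) : Set (Fml Cst Rl ar) :=
  ⋃ γ ∈ Γ, γ.cl C

/-- Conjunction of a finite list of formulas. -/
def conjList : List (Fml Cst Rl ar) → Fml Cst Rl ar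
  | [] => .top
  | φ :: L => .and φ (conjList L)

end Depths

/-- A pair `⟨p⁺, p⁻⟩` of sets of formulas. -/
structure Pair (Cst Rl : Type) (ar : Rl → ℕ) where
  pos : Set (Fml Cst Rl ar)
  neg : Set (Fml Cst Rl ar)

namespace Pair

variable {Cst Rl : Type} {ar : Rl → ℕ}

/-- All formulas of the pair are closed. -/
def ClosedP (p : Pair Cst Rl ar) : Prop := ∀ φ ∈ p.pos ∪ p.neg, φ.Closed

/-- Consistency: the conjunction of (finitely many formulas of) `p⁺` does not
derive any formula of `p⁻`. -/
def Consistent (p : Pair Cst Rl ar) : Prop :=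
  ∀ δ ∈ p.neg, ∀ L : List (Fml Cst Rl ar), (∀ χ ∈ L, χ ∈ p.pos) → ¬ Der (conjList L) δ

/-- `Φ`-maximality: every formula of `Φ` is in `p⁺` or in `p⁻`, and `p`
contains only formulas of `Φ`. -/
def MaximalIn (Φ : Set (Fml Cst Rl ar)) (p : Pair Cst Rl ar) : Prop :=
  (∀ χ ∈ Φ, χ ∈ p.pos ∨ χ ∈ p.neg) ∧ p.pos ∪ p.neg ⊆ Φ

/-- Fully witnessed: every negative universal has a constant witness. -/
def FullyWitnessed (p : Pair Cst Rl ar) : Prop :=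
  ∀ (x : ℕ) (φ : Fml Cst Rl ar), Fml.all x φ ∈ p.neg →
    ∃ c : Cst, φ.subst x (.inr c) ∈ p.neg

/-- `Φ`-maximal, consistent, fully witnessed (and closed) pair. -/
def MCW (Φ : Set (Fml Cst Rl ar)) (p : Pair Cst Rl ar) : Prop :=
  p.ClosedP ∧ p.MaximalIn Φ ∧ p.Consistent ∧ p.FullyWitnessed

end Pair

/-- The relation `R̂` between pairs. -/
def hatR {Cst Rl : Type} {ar : Rl → ℕ} (p q : Pair Cst Rl ar) : Prop :=
  (∀ φ : Fml Cst Rl ar, Fml.dia φ ∈ p.neg → φ ∈ q.neg ∧ Fml.dia φ ∈ q.neg) ∧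
  ∃ ψ : Fml Cst Rl ar, Fml.dia ψ ∈ p.pos ∧ Fml.dia ψ ∈ q.neg

/-- A relational model for QRC₁. -/
structure Model (Cst Rl : Type) (ar : Rl → ℕ) where
  W : Type
  R : W → W → Prop
  Dom : W → Type
  finDom : ∀ w, Finite (Dom w)
  η : ∀ w v, R w v → Dom w → Dom v
  I : ∀ w, Cst → Dom w
  J : ∀ w (S : Rl), Set (Fin (ar S) → Dom w)

namespace Model

variable {Cst Rl : Type} {ar : Rl → ℕ} (M : Model Cst Rl ar)

/-- Value of a term under a `w`-assignment. -/
def tval {w : M.W} (g : ℕ → M.Dom w) : ℕ ⊕ Cst → M.Dom w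
  | .inl x => g x
  | .inr c => M.I w c

/-- Kripke satisfaction `M, w ⊩^g φ`. -/
def Sat : (w : M.W) → (g : ℕ → M.Dom w) → Fml Cst Rl ar → Prop
  | _, _, .top => True
  | w, g, .rel S ts => (fun i => M.tval g (ts i)) ∈ M.J w S
  | w, g, .and φ ψ => Sat w g φ ∧ Sat w g ψ
  | w, g, .dia φ => ∃ (v : M.W) (h : M.R w v), Sat v (fun n => M.η w v h (g n)) φ
  | w, g, .all x φ => ∀ h : ℕ → M.Dom w, (∀ y, y ≠ x → h y = g y) → Sat w h φ

/-- Adequate models: transitive accessibility, transitive `η` functions, and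
concordant interpretation of constants. -/
structure Adequate : Prop where
  trans : Transitive M.R
  etaTrans : ∀ {w u v : M.W} (h1 : M.R w u) (h2 : M.R u v) (h3 : M.R w v),
    M.η w v h3 = M.η u v h2 ∘ M.η w u h1
  concord : ∀ {w u : M.W} (h : M.R w u) (c : Cst), M.I u c = M.η w u h (M.I w c)

/-- Constant domain: all worlds have the same domain. -/
def ConstantDomain : Prop := ∀ w v : M.W, M.Dom w = M.Dom v

end Model


theorem der_subst_right (Cst Rl : Type) (ar : Rl → ℕ) (φ ψ : Fml Cst Rl ar)
    (x : ℕ) (t : ℕ ⊕ Cst) (h : Der φ ψ) (hx : x ∉ φ.fv)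
    (ht : Fml.FreeFor t x ψ) :
    Der φ (ψ.subst x t) :=
  Der.cut (Der.allI x h hx) (Der.allE x t (Der.refl _) ht)


end QRC1
end

section
/- If φ ⊢ ψ[x/c] is derivable in QRC₁, x is not free in φ, and the constant c occurs in neither φ nor ψ, then φ ⊢ ∀x ψ is derivable in QRC₁ (generalization on constants on the right). -/
namespace QRC1

theorem subst_eq_of_not_mem_fv {Cst Rl : Type} {ar : Rl → ℕ}
    (φ : Fml Cst Rl ar) (x : ℕ) (t : ℕ ⊕ Cst) (hx : x ∉ φ.fv) :
    φ.subst x t = φ := by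
  induction φ generalizing x t with
  | top => rfl
  | rel S ts =>
      simp only [Fml.subst, Fml.rel.injEq, heq_eq_eq, true_and]
      funext i
      cases hts : ts i with
      | inl y =>
          simp only [Fml.substT]
          have : y ≠ x := fun h => hx ⟨i, by rw [hts, h]⟩
          simp [this]
      | inr c => rfl
  | and φ ψ ihφ ihψ =>
      have hx' : x ∉ φ.fv ∧ x ∉ ψ.fv := by
        constructor <;> intro h <;> exact hx (by simp [Fml.fv, h])
      simp [Fml.subst, ihφ x t hx'.1, ihψ x t hx'.2]
  | dia φ ih => simp [Fml.subst, ih x t hx]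
  | all y φ ih =>
      by_cases hyx : y = x
      · simp [Fml.subst, hyx]
      · have hx' : x ∉ φ.fv := fun h => hx ⟨h, Ne.symm hyx⟩
        simp [Fml.subst, hyx, ih x t hx']

theorem der_all_of_const (Cst Rl : Type) (ar : Rl → ℕ) (φ ψ : Fml Cst Rl ar)
    (x : ℕ) (c : Cst) (h : Der φ (ψ.subst x (Sum.inr c))) (hx : x ∉ φ.fv)
    (hcφ : c ∉ φ.consts) (hcψ : c ∉ ψ.consts) :
    Der φ (Fml.all x ψ) := by
  have hsub : φ.subst x (Sum.inr c) = φ := subst_eq_of_not_mem_fv φ x _ hx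
  have hψ : Der φ ψ := Der.genC x c (by rw [hsub]; exact h) hcφ hcψ
  exact Der.allI x hψ hx


end QRC1
end

section
/- If the sequent φ ⊢ ψ is derivable in QRC₁, then mdepth(φ) ≥ mdepth(ψ), where mdepth denotes the modal depth of a formula. -/
namespace QRC1

namespace Fml

variable {Cst Rl : Type} {ar : Rl → ℕ}

@[simp]
theorem mdepth_subst (φ : Fml Cst Rl ar) (x : ℕ) (t : ℕ ⊕ Cst) :
    (φ.subst x t).mdepth = φ.mdepth := by
  induction φ generalizing x t with
  | top | rel => rfl
  | and φ ψ ihφ ihψ => simp only [subst, mdepth, ihφ, ihψ]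
  | dia φ ih => simp only [subst, mdepth, ih]
  | all y φ ih => unfold subst; split_ifs <;> simp only [mdepth, ih]

end Fml

theorem mdepth_le_of_der (Cst Rl : Type) (ar : Rl → ℕ) (φ ψ : Fml Cst Rl ar)
    (h : Der φ ψ) : ψ.mdepth ≤ φ.mdepth := by
  induction h with
  | top => exact Nat.zero_le _
  | refl => exact le_rfl
  | andE1 => exact le_max_left _ _
  | andE2 => exact le_max_right _ _
  | andI _ _ ih₁ ih₂ => exact max_le ih₁ ih₂
  | cut _ _ ih₁ ih₂ => exact ih₂.trans ih₁
  | diaMono _ ih => exact Nat.succ_le_succ ih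
  | diaTrans => exact Nat.le_succ _
  | allI _ _ _ ih => exact ih
  | allE _ _ _ _ ih => rwa [Fml.mdepth_subst] at ih
  | inst _ _ _ _ _ ih => rwa [Fml.mdepth_subst, Fml.mdepth_subst]
  | genC _ _ _ _ _ ih => rwa [Fml.mdepth_subst, Fml.mdepth_subst] at ih

end QRC1
end

section
/- For any formula φ, the sequent φ ⊢ ◇φ is not derivable in QRC₁ (irreflexivity of the calculus). -/
namespace QRC1

theorem Fml.mdepth_subst_s7 {Cst Rl : Type} {ar : Rl → ℕ} (φ : Fml Cst Rl ar) (x : ℕ)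
    (t : ℕ ⊕ Cst) : (φ.subst x t).mdepth = φ.mdepth := by
  induction φ generalizing x t with
  | top => rfl
  | rel S ts => rfl
  | and φ ψ ihφ ihψ => simp [Fml.subst, Fml.mdepth, ihφ, ihψ]
  | dia φ ih => simp [Fml.subst, Fml.mdepth, ih]
  | all y φ ih => by_cases h : y = x <;> simp [Fml.subst, h, Fml.mdepth, ih]

theorem Der.mdepth_le {Cst Rl : Type} {ar : Rl → ℕ} {φ ψ : Fml Cst Rl ar}
    (h : Der φ ψ) : ψ.mdepth ≤ φ.mdepth := by
  induction h with
  | top => simp [Fml.mdepth]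
  | refl => exact le_refl _
  | andE1 φ ψ => simp [Fml.mdepth]
  | andE2 φ ψ => simp [Fml.mdepth]
  | andI _ _ ih1 ih2 => simp [Fml.mdepth]; omega
  | cut _ _ ih1 ih2 => omega
  | diaMono _ ih => simp [Fml.mdepth]; omega
  | diaTrans φ => simp [Fml.mdepth]
  | allI x _ _ ih => simpa [Fml.mdepth] using ih
  | allE x t _ _ ih => simpa [Fml.mdepth, Fml.mdepth_subst_s7] using ih
  | inst x t _ _ _ ih => simpa [Fml.mdepth_subst_s7] using ih
  | genC x c _ _ _ ih => simpa [Fml.mdepth_subst_s7] using ih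

theorem not_der_dia_self (Cst Rl : Type) (ar : Rl → ℕ) (φ : Fml Cst Rl ar) :
    ¬ Der φ (Fml.dia φ) := by
  intro h
  have := h.mdepth_le
  simp [Fml.mdepth] at this


end QRC1
end

section
/- Let Σ be a signature and let Σ_C be the signature obtained by adding to Σ a collection C of new constants not occurring in Σ. If φ and ψ are formulas in the language of Σ and the sequent φ ⊢ ψ is derivable in QRC₁ over the signature Σ_C, then φ ⊢ ψ is derivable in QRC₁ over the signature Σ (conservativity of signature extension by constants). -/
/-!
A derivation over `Σ_C` is mapped rule by rule to one over `Σ` by keeping the old constants and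
replacing each new constant by a variable, its *ghost*. This works as long as, in every sequent,
the ghosts of distinct constants are distinct and occur nowhere else. The premises of `cut`,
`∀`-elimination, instantiation and generalisation may contain variables that clash with the
ghosts chosen for the conclusion, so the induction hypothesis is taken over all admissible
choices of ghosts: the conclusion for one choice follows from that for another by moving ghosts
one at a time with the instantiation rule. The eigenconstant of constant generalisation gets a
fresh ghost, and instantiation turns that ghost back into the generalised variable.
-/

namespace QRC1

@[simp]
theorem finite_inl_preimage_singleton {α β : Type*} (t : α ⊕ β) : (Sum.inl ⁻¹' {t}).Finite :=
  (Set.finite_singleton t).preimage Sum.inl_injective.injOn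

@[simp]
theorem finite_inr_preimage_singleton {α β : Type*} (t : α ⊕ β) : (Sum.inr ⁻¹' {t}).Finite :=
  (Set.finite_singleton t).preimage Sum.inr_injective.injOn

theorem exists_inl_of_inr_iff_of_ne {α β : Type*} {a b : α ⊕ β}
    (h : ∀ d, a = .inr d ↔ b = .inr d) (hne : b ≠ a) : (∃ v, a = .inl v) ∧ ∃ w, b = .inl w := by
  rcases a with v | d
  · rcases b with w | d'
    · exact ⟨⟨v, rfl⟩, ⟨w, rfl⟩⟩
    · exact absurd ((h d').2 rfl) (by simp)
  · exact absurd ((h d).1 rfl).symm hne.symm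

namespace Fml

variable {Cst Cst' Rl : Type} {ar : Rl → ℕ}

def vars : Fml Cst Rl ar → Set ℕ
  | .top => ∅
  | .rel _ ts => {x | ∃ i, ts i = .inl x}
  | .and φ ψ => vars φ ∪ vars ψ
  | .dia φ => vars φ
  | .all y φ => insert y (vars φ)

@[simp]
theorem vars_finite (A : Fml Cst Rl ar) : A.vars.Finite := by
  induction A with
  | top => exact Set.finite_empty
  | rel S ts =>
    refine ((Set.finite_range ts).preimage Sum.inl_injective.injOn).subset ?_
    rintro x ⟨i, hi⟩
    exact ⟨i, hi⟩
  | and φ ψ ihφ ihψ => exact ihφ.union ihψ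
  | dia φ ih => exact ih
  | all y φ ih => exact ih.insert y

@[simp]
theorem consts_finite (A : Fml Cst Rl ar) : A.consts.Finite := by
  induction A with
  | top => exact Set.finite_empty
  | rel S ts =>
    refine ((Set.finite_range ts).preimage Sum.inr_injective.injOn).subset ?_
    rintro c ⟨i, hi⟩
    exact ⟨i, hi⟩
  | and φ ψ ihφ ihψ => exact ihφ.union ihψ
  | dia φ ih => exact ih
  | all y φ ih => exact ih

theorem fv_subset_vars (A : Fml Cst Rl ar) : A.fv ⊆ A.vars := by
  induction A with
  | top => exact le_rfl
  | rel S ts => exact le_rfl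
  | and φ ψ ihφ ihψ => exact Set.union_subset_union ihφ ihψ
  | dia φ ih => exact ih
  | all y φ ih => exact Set.sdiff_subset.trans (ih.trans (Set.subset_insert y _))

theorem subst_eq_self {A : Fml Cst Rl ar} {x : ℕ} (t : ℕ ⊕ Cst) (h : x ∉ A.fv) :
    A.subst x t = A := by
  induction A with
  | top => rfl
  | rel S ts =>
    refine congrArg _ (funext fun i => ?_)
    rcases hi : ts i with y | c
    · have : y ≠ x := by rintro rfl; exact h ⟨i, hi⟩
      simp [substT, this]
    · rfl
  | and φ ψ ihφ ihψ =>
    simp only [fv, Set.mem_union, not_or] at h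
    simp only [subst, ihφ h.1, ihψ h.2]
  | dia φ ih => simp only [subst, ih h]
  | all y φ ih =>
    by_cases hyx : y = x
    · simp [subst, hyx]
    · have : x ∉ φ.fv := fun hx => h ⟨hx, Ne.symm hyx⟩
      simp [subst, hyx, ih this]

theorem subst_subst_cancel {A : Fml Cst Rl ar} {x v : ℕ} (h : v ∉ A.vars) :
    (A.subst x (.inl v)).subst v (.inl x) = A := by
  induction A with
  | top => rfl
  | rel S ts =>
    refine congrArg _ (funext fun i => ?_)
    rcases hi : ts i with y | c
    · have : y ≠ v := by rintro rfl; exact h ⟨i, hi⟩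
      by_cases hyx : y = x <;> simp [substT, hi, hyx, this]
    · simp [substT, hi]
  | and φ ψ ihφ ihψ =>
    simp only [vars, Set.mem_union, not_or] at h
    simp only [subst, ihφ h.1, ihψ h.2]
  | dia φ ih => simp only [subst, ih h]
  | all y φ ih =>
    simp only [vars, Set.mem_insert_iff, not_or] at h
    by_cases hyx : y = x
    · simp [subst, hyx, Ne.symm (hyx ▸ h.1),
        subst_eq_self _ fun hv => h.2 (fv_subset_vars φ hv)]
    · simp [subst, hyx, Ne.symm h.1, ih h.2]

theorem freeFor_subst_cancel {A : Fml Cst Rl ar} {x v : ℕ} (h : v ∉ A.vars) :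
    FreeFor (.inl x) v (A.subst x (.inl v)) := by
  induction A with
  | top | rel => trivial
  | and φ ψ ihφ ihψ =>
    simp only [vars, Set.mem_union, not_or] at h
    exact ⟨ihφ h.1, ihψ h.2⟩
  | dia φ ih => exact ih h
  | all y φ ih =>
    simp only [vars, Set.mem_insert_iff, not_or] at h
    by_cases hyx : y = x
    · simp only [subst, if_pos hyx]
      exact Or.inl fun hv => h.2 (fv_subset_vars φ hv.1)
    · simp only [subst, if_neg hyx]
      exact Or.inr ⟨fun hxy => hyx (Sum.inl_injective hxy).symm, ih h.2⟩

theorem consts_mapC (g : Cst → Cst') (A : Fml Cst Rl ar) :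
    (A.mapC g).consts = g '' A.consts := by
  induction A with
  | top => simp [mapC, consts]
  | rel S ts =>
    ext c
    simp only [mapC, consts, Set.mem_ofPred_eq, Set.mem_image]
    constructor
    · rintro ⟨i, hi⟩
      rcases hts : ts i with y | d
      · simp [hts] at hi
      · simp only [hts, Sum.map_inr, Sum.inr.injEq] at hi
        exact ⟨d, ⟨i, hts⟩, hi⟩
    · rintro ⟨d, ⟨i, hi⟩, rfl⟩
      exact ⟨i, by simp [hi]⟩
  | and φ ψ ihφ ihψ => simp [mapC, consts, ihφ, ihψ, Set.image_union]
  | dia φ ih => exact ih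
  | all y φ ih => exact ih

theorem consts_subst_subset (A : Fml Cst Rl ar) (x : ℕ) (t : ℕ ⊕ Cst) :
    (A.subst x t).consts ⊆ A.consts ∪ Sum.inr ⁻¹' {t} := by
  induction A with
  | top => simp [subst, consts]
  | rel S ts =>
    rintro c ⟨i, hi⟩
    rcases hts : ts i with y | d
    · by_cases hyx : y = x <;> simp [substT, hts, hyx] at hi
      exact Or.inr hi.symm
    · simp only [substT, hts, Sum.inr.injEq] at hi
      exact Or.inl ⟨i, hi ▸ hts⟩
  | and φ ψ ihφ ihψ => simp only [subst, consts]; grind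
  | dia φ ih => exact ih
  | all y φ ih =>
    by_cases hyx : y = x
    · simp only [subst, if_pos hyx]
      exact Set.subset_union_left
    · simp only [subst, if_neg hyx]
      exact ih

theorem vars_subst_subset (A : Fml Cst Rl ar) (x : ℕ) (t : ℕ ⊕ Cst) :
    (A.subst x t).vars ⊆ A.vars ∪ Sum.inl ⁻¹' {t} := by
  induction A with
  | top => simp [subst, vars]
  | rel S ts =>
    rintro v ⟨i, hi⟩
    rcases hts : ts i with y | d
    · by_cases hyx : y = x <;> simp [substT, hts, hyx] at hi
      · exact Or.inr hi.symm
      · exact Or.inl ⟨i, hi ▸ hts⟩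
    · simp [substT, hts] at hi
  | and φ ψ ihφ ihψ => simp only [subst, vars]; grind
  | dia φ ih => exact ih
  | all y φ ih =>
    by_cases hyx : y = x
    · simp only [subst, if_pos hyx]
      exact Set.subset_union_left
    · simp only [subst, if_neg hyx, vars]
      grind

def substConsts (f : Cst → ℕ ⊕ Cst') : Fml Cst Rl ar → Fml Cst' Rl ar
  | .top => .top
  | .rel S ts => .rel S fun i => Sum.elim .inl f (ts i)
  | .and φ ψ => .and (φ.substConsts f) (ψ.substConsts f)
  | .dia φ => .dia (φ.substConsts f)
  | .all x φ => .all x (φ.substConsts f)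

def ghosts (f : Cst → ℕ ⊕ Cst') (S : Set Cst) : Set ℕ := {v | ∃ c ∈ S, f c = .inl v}

@[simp]
theorem ghosts_finite (f : Cst → ℕ ⊕ Cst') {S : Set Cst} (hS : S.Finite) :
    (ghosts f S).Finite := by
  refine ((hS.image f).preimage Sum.inl_injective.injOn).subset ?_
  rintro v ⟨c, hc, hv⟩
  exact ⟨c, hc, hv⟩

theorem ghosts_mono (f : Cst → ℕ ⊕ Cst') {S T : Set Cst} (h : S ⊆ T) :
    ghosts f S ⊆ ghosts f T :=
  fun _ ⟨c, hc, hv⟩ => ⟨c, h hc, hv⟩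

variable {f g : Cst → ℕ ⊕ Cst'}

theorem fv_substConsts_subset (A : Fml Cst Rl ar) :
    (A.substConsts f).fv ⊆ A.fv ∪ ghosts f A.consts := by
  induction A with
  | top => simp [substConsts, fv]
  | rel S ts =>
    rintro v ⟨i, hi⟩
    rcases hts : ts i with y | c
    · simp only [hts, Sum.elim_inl, Sum.inl.injEq] at hi
      exact Or.inl ⟨i, hi ▸ hts⟩
    · simp only [hts, Sum.elim_inr] at hi
      exact Or.inr ⟨c, ⟨i, hts⟩, hi⟩
  | and φ ψ ihφ ihψ =>
    refine Set.union_subset (ihφ.trans ?_) (ihψ.trans ?_) <;>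
      exact Set.union_subset_union (by simp [fv]) (ghosts_mono f (by simp [consts]))
  | dia φ ih => exact ih
  | all y φ ih =>
    rintro v ⟨hv, hvy⟩
    exact (ih hv).imp (fun h => ⟨h, hvy⟩) id

theorem vars_substConsts_subset (A : Fml Cst Rl ar) :
    (A.substConsts f).vars ⊆ A.vars ∪ ghosts f A.consts := by
  induction A with
  | top => simp [substConsts, vars]
  | rel S ts =>
    rintro v ⟨i, hi⟩
    rcases hts : ts i with y | c
    · simp only [hts, Sum.elim_inl, Sum.inl.injEq] at hi
      exact Or.inl ⟨i, hi ▸ hts⟩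
    · simp only [hts, Sum.elim_inr] at hi
      exact Or.inr ⟨c, ⟨i, hts⟩, hi⟩
  | and φ ψ ihφ ihψ =>
    refine Set.union_subset (ihφ.trans ?_) (ihψ.trans ?_) <;>
      exact Set.union_subset_union (by simp [vars]) (ghosts_mono f (by simp [consts]))
  | dia φ ih => exact ih
  | all y φ ih =>
    refine Set.insert_subset (Or.inl (Set.mem_insert y _)) (ih.trans ?_)
    exact Set.union_subset_union_left _ (Set.subset_insert y _)

theorem substConsts_congr {A : Fml Cst Rl ar} (h : Set.EqOn f g A.consts) :
    A.substConsts f = A.substConsts g := by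
  induction A with
  | top => rfl
  | rel S ts =>
    refine congrArg _ (funext fun i => ?_)
    rcases hts : ts i with y | c
    · rfl
    · exact h ⟨i, hts⟩
  | and φ ψ ihφ ihψ =>
    simp only [substConsts, ihφ fun c hc => h (Or.inl hc), ihψ fun c hc => h (Or.inr hc)]
  | dia φ ih => simp only [substConsts, ih h]
  | all y φ ih => simp only [substConsts, ih h]

theorem substConsts_subst {A : Fml Cst Rl ar} {x : ℕ} (t : ℕ ⊕ Cst)
    (hx : x ∉ ghosts f A.consts) :
    (A.subst x t).substConsts f = (A.substConsts f).subst x (Sum.elim .inl f t) := by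
  induction A with
  | top => rfl
  | rel S ts =>
    refine congrArg _ (funext fun i => ?_)
    rcases hts : ts i with y | c
    · by_cases hyx : y = x <;> simp [substT, hts, hyx]
    · rcases hfc : f c with v | d
      · have : v ≠ x := by rintro rfl; exact hx ⟨c, ⟨i, hts⟩, hfc⟩
        simp [substT, hts, hfc, this]
      · simp [substT, hts, hfc]
  | and φ ψ ihφ ihψ =>
    simp only [subst, substConsts,
      ihφ fun h => hx (ghosts_mono f Set.subset_union_left h),
      ihψ fun h => hx (ghosts_mono f Set.subset_union_right h)]
  | dia φ ih => simp only [subst, substConsts, ih hx]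
  | all y φ ih => by_cases hyx : y = x <;> simp [subst, substConsts, hyx, ih hx]

theorem subst_substConsts_eq_update [DecidableEq Cst] {A : Fml Cst Rl ar} {c : Cst} {v : ℕ}
    (t : ℕ ⊕ Cst') (hv : v ∉ A.vars) (hfc : f c = .inl v)
    (huniq : ∀ c' ∈ A.consts, f c' = .inl v → c' = c) :
    (A.substConsts f).subst v t = A.substConsts (Function.update f c t) := by
  induction A with
  | top => rfl
  | rel S ts =>
    refine congrArg _ (funext fun i => ?_)
    rcases hts : ts i with y | c'
    · have : y ≠ v := by rintro rfl; exact hv ⟨i, hts⟩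
      simp [substT, hts, this]
    · by_cases hc' : c' = c
      · subst hc'
        simp [substT, hts, hfc]
      · have hne : f c' ≠ .inl v := fun h => hc' (huniq c' ⟨i, hts⟩ h)
        rcases hfc' : f c' with w | d
        · have : w ≠ v := by rintro rfl; exact hne hfc'
          simp [substT, hts, hfc', hc', this]
        · simp [substT, hts, hfc', hc']
  | and φ ψ ihφ ihψ =>
    simp only [vars, Set.mem_union, not_or] at hv
    simp only [subst, substConsts, ihφ hv.1 fun c' hc' => huniq c' (Or.inl hc'),
      ihψ hv.2 fun c' hc' => huniq c' (Or.inr hc')]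
  | dia φ ih => simp only [subst, substConsts, ih hv huniq]
  | all y φ ih =>
    simp only [vars, Set.mem_insert_iff, not_or] at hv
    simp [subst, substConsts, Ne.symm hv.1, ih hv.2 huniq]

theorem freeFor_substConsts_of_notMem_vars {A : Fml Cst Rl ar} {w : ℕ} (x : ℕ)
    (hw : w ∉ A.vars) : FreeFor (.inl w) x (A.substConsts f) := by
  induction A with
  | top | rel => trivial
  | and φ ψ ihφ ihψ =>
    simp only [vars, Set.mem_union, not_or] at hw
    exact ⟨ihφ hw.1, ihψ hw.2⟩
  | dia φ ih => exact ih hw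
  | all y φ ih =>
    simp only [vars, Set.mem_insert_iff, not_or] at hw
    exact Or.inr ⟨fun h => hw.1 (Sum.inl_injective h), ih hw.2⟩

theorem FreeFor.substConsts {A : Fml Cst Rl ar} {t : ℕ ⊕ Cst} {x : ℕ} (h : FreeFor t x A)
    (hx : x ∉ ghosts f A.consts) (ht : ∀ c v, t = .inr c → f c = .inl v → v ∉ A.vars) :
    FreeFor (Sum.elim .inl f t) x (A.substConsts f) := by
  induction A with
  | top | rel => trivial
  | and φ ψ ihφ ihψ =>
    simp only [vars, Set.mem_union, not_or] at ht
    exact ⟨ihφ h.1 (fun h => hx (ghosts_mono f Set.subset_union_left h))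
        fun c v htc hfc => (ht c v htc hfc).1,
      ihψ h.2 (fun h => hx (ghosts_mono f Set.subset_union_right h))
        fun c v htc hfc => (ht c v htc hfc).2⟩
  | dia φ ih => exact ih h hx ht
  | all y φ ih =>
    simp only [vars, Set.mem_insert_iff, not_or] at ht
    rcases h with h | ⟨hty, h⟩
    · refine Or.inl fun hmem => ?_
      rcases (fv_substConsts_subset (.all y φ)) hmem with h' | h'
      exacts [h h', hx h']
    · refine Or.inr ⟨?_, ih h hx fun c v htc hfc => (ht c v htc hfc).2⟩
      rcases t with z | c
      · simpa using hty
      · rcases hfc : f c with v | d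
        · simpa [hfc] using (ht c v rfl hfc).1
        · simp [hfc]

theorem substConsts_mapC (f : Cst' → ℕ ⊕ Cst) (g : Cst → Cst') (A : Fml Cst Rl ar) :
    (A.mapC g).substConsts f = A.substConsts (f ∘ g) := by
  induction A with
  | top => rfl
  | rel S ts =>
    refine congrArg _ (funext fun i => ?_)
    rcases hts : ts i with y | c <;> simp [hts]
  | and φ ψ ihφ ihψ => simp only [mapC, substConsts, ihφ, ihψ]
  | dia φ ih => simp only [mapC, substConsts, ih]
  | all y φ ih => simp only [mapC, substConsts, ih]

@[simp]
theorem substConsts_inr (A : Fml Cst Rl ar) : A.substConsts .inr = A := by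
  induction A with
  | top => rfl
  | rel S ts =>
    refine congrArg _ (funext fun i => ?_)
    rcases ts i with y | c <;> rfl
  | and φ ψ ihφ ihψ => simp only [substConsts, ihφ, ihψ]
  | dia φ ih => simp only [substConsts, ih]
  | all y φ ih => simp only [substConsts, ih]

end Fml

open Fml

variable {Cst Cst' Rl : Type} {ar : Rl → ℕ}

structure FreshOn (f : Cst → ℕ ⊕ Cst') (S : Set Cst) (V : Set ℕ) : Prop where
  notMem : ∀ ⦃c⦄, c ∈ S → ∀ ⦃v⦄, f c = .inl v → v ∉ V
  injOn : ∀ ⦃c c'⦄, c ∈ S → c' ∈ S → ∀ ⦃v⦄, f c = .inl v → f c' = .inl v → c = c'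

namespace FreshOn

variable {f g : Cst → ℕ ⊕ Cst'} {S S' : Set Cst} {V V' : Set ℕ} {A : Fml Cst Rl ar}

theorem mono (hf : FreshOn f S V) (hS : S' ⊆ S) (hV : V' ⊆ V) : FreshOn f S' V' :=
  ⟨fun _ hc _ hfc hv => hf.notMem (hS hc) hfc (hV hv),
    fun _ _ hc hc' => hf.injOn (hS hc) (hS hc')⟩

theorem congr (hf : FreshOn f S V) (h : Set.EqOn f g S) : FreshOn g S V :=
  ⟨fun _ hc _ hgc => hf.notMem hc (h hc ▸ hgc),
    fun _ _ hc hc' _ hgc hgc' => hf.injOn hc hc' (h hc ▸ hgc) (h hc' ▸ hgc')⟩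

theorem notMem_ghosts (hf : FreshOn f S V) {x : ℕ} (hx : x ∈ V) (hS : S' ⊆ S) :
    x ∉ ghosts f S' :=
  fun ⟨_, hc, hfc⟩ => hf.notMem (hS hc) hfc hx

theorem update [DecidableEq Cst] (hf : FreshOn f S V) {c : Cst} {w : ℕ} (hw : w ∉ V)
    (hfree : ∀ c' ∈ S, c' ≠ c → f c' ≠ .inl w) :
    FreshOn (Function.update f c (.inl w)) S V := by
  refine ⟨fun c' hc' v hv => ?_, fun c₁ c₂ hc₁ hc₂ v hv₁ hv₂ => ?_⟩
  · by_cases h : c' = c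
    · subst h
      simp only [Function.update_self, Sum.inl.injEq] at hv
      exact hv ▸ hw
    · exact hf.notMem hc' (by simpa [h] using hv)
  · by_cases h₁ : c₁ = c <;> by_cases h₂ : c₂ = c
    · exact h₁.trans h₂.symm
    · subst h₁
      simp only [Function.update_self, Sum.inl.injEq, Function.update_of_ne h₂] at hv₁ hv₂
      exact absurd (hv₁ ▸ hv₂) (hfree c₂ hc₂ h₂)
    · subst h₂
      simp only [Function.update_self, Sum.inl.injEq, Function.update_of_ne h₁] at hv₁ hv₂
      exact absurd (hv₂ ▸ hv₁) (hfree c₁ hc₁ h₁)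
    · simp only [Function.update_of_ne h₁, Function.update_of_ne h₂] at hv₁ hv₂
      exact hf.injOn hc₁ hc₂ hv₁ hv₂

theorem of_forall_inr (h : ∀ c ∈ S, ∃ d, g c = .inr d) : FreshOn g S V := by
  refine ⟨fun c hc v hv => ?_, fun c _ hc _ v hv _ => ?_⟩ <;>
  · obtain ⟨d, hd⟩ := h c hc
    simp [hd] at hv

theorem freeFor_substConsts (hg : FreshOn g S V) {t : ℕ ⊕ Cst} {x : ℕ} (h : FreeFor t x A)
    (hS : A.consts ∪ Sum.inr ⁻¹' {t} ⊆ S) (hV : insert x A.vars ⊆ V) :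
    FreeFor (Sum.elim .inl g t) x (A.substConsts g) :=
  h.substConsts (hg.notMem_ghosts (hV (Set.mem_insert x _)) (by grind))
    fun c _ htc hgc hv => hg.notMem (hS (Or.inr htc.symm)) hgc (hV (Or.inr hv))

theorem notMem_vars_substConsts (hg : FreshOn g S V) {c : Cst} {v : ℕ} (hc : c ∈ S)
    (hgc : g c = .inl v) (hA : A.consts ⊆ S) (hcA : c ∉ A.consts) (hV : A.vars ⊆ V) :
    v ∉ (A.substConsts g).vars := fun hv => by
  rcases vars_substConsts_subset A hv with hv | ⟨c', hc', hgc'⟩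
  · exact hg.notMem hc hgc (hV hv)
  · exact hcA (hg.injOn (hA hc') hc hgc' hgc ▸ hc')

end FreshOn

theorem exists_freshOn {S : Set Cst} {V : Set ℕ} (hS : S.Finite) (hV : V.Finite)
    (f : Cst → ℕ ⊕ Cst') :
    ∃ g : Cst → ℕ ⊕ Cst', (∀ c d, f c = .inr d ↔ g c = .inr d) ∧ FreshOn g S V := by
  obtain ⟨e, he⟩ := Set.countable_iff_exists_injOn.1 hS.countable
  obtain ⟨N, hN⟩ := hV.bddAbove
  refine ⟨fun c => Sum.elim (fun _ => .inl (N + 1 + e c)) .inr (f c), fun c d => ?_,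
    fun c _ v hv hvV => ?_, fun c c' hc hc' v hv hv' => he hc hc' ?_⟩
  · rcases hfc : f c with u | d' <;> simp [hfc]
  · rcases hfc : f c with u | d <;> simp only [hfc, Sum.elim_inl, Sum.elim_inr,
      Sum.inl.injEq, reduceCtorEq] at hv
    have := hN hvV
    omega
  · rcases hfc : f c with u | d <;> rcases hfc' : f c' with u' | d' <;>
      simp only [hfc, hfc', Sum.elim_inl, Sum.elim_inr, Sum.inl.injEq, reduceCtorEq] at hv hv'
    omega

namespace Der

variable {A B : Fml Cst Rl ar} {f g : Cst → ℕ ⊕ Cst'}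

theorem substConsts_update [DecidableEq Cst] {c : Cst} {v w : ℕ}
    (hg : FreshOn g (A.consts ∪ B.consts) (A.vars ∪ B.vars)) (hc : c ∈ A.consts ∪ B.consts)
    (hgc : g c = .inl v) (hw : w ∉ A.vars ∪ B.vars) (h : Der (A.substConsts g) (B.substConsts g)) :
    Der (A.substConsts (Function.update g c (.inl w)))
      (B.substConsts (Function.update g c (.inl w))) := by
  have hv := hg.notMem hc hgc
  simp only [Set.mem_union, not_or] at hv hw
  have huniq : ∀ c' ∈ A.consts ∪ B.consts, g c' = .inl v → c' = c :=
    fun c' hc' hgc' => hg.injOn hc' hc hgc' hgc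
  have := Der.inst v (.inl w) h (freeFor_substConsts_of_notMem_vars v hw.1)
    (freeFor_substConsts_of_notMem_vars v hw.2)
  rwa [subst_substConsts_eq_update _ hv.1 hgc fun c' hc' => huniq c' (Or.inl hc'),
    subst_substConsts_eq_update _ hv.2 hgc fun c' hc' => huniq c' (Or.inr hc')] at this

/-- The ghosts of `g` are moved onto those of `f` one constant of `s` at a time. -/
theorem substConsts_of_agree_outside [DecidableEq Cst]
    (hf : FreshOn f (A.consts ∪ B.consts) (A.vars ∪ B.vars)) (s : Finset Cst) :
    ∀ g : Cst → ℕ ⊕ Cst', FreshOn g (A.consts ∪ B.consts) (A.vars ∪ B.vars) →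
      (∀ c d, f c = .inr d ↔ g c = .inr d) →
      (∀ c ∈ A.consts ∪ B.consts, g c ≠ f c →
        c ∈ s ∧ ∀ v, f c = .inl v → v ∉ ghosts g (A.consts ∪ B.consts)) →
      Der (A.substConsts g) (B.substConsts g) → Der (A.substConsts f) (B.substConsts f) := by
  induction s using Finset.induction_on with
  | empty =>
    intro g _ _ hdiff h
    have heq : Set.EqOn g f (A.consts ∪ B.consts) :=
      fun c hc => by_contra fun hne => Finset.notMem_empty c (hdiff c hc hne).1
    rwa [substConsts_congr (heq.mono Set.subset_union_left),
      substConsts_congr (heq.mono Set.subset_union_right)] at h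
  | insert c s hcs ih =>
    intro g hg hfg hdiff h
    by_cases hc : c ∈ A.consts ∪ B.consts ∧ g c ≠ f c
    · obtain ⟨hcS, hne⟩ := hc
      obtain ⟨⟨v, hfc⟩, ⟨w, hgc⟩⟩ := exists_inl_of_inr_iff_of_ne (hfg c) hne
      have hv := (hdiff c hcS hne).2 v hfc
      refine ih (Function.update g c (.inl v))
        (hg.update (hf.notMem hcS hfc) fun c' hc' _ hgc' => hv ⟨c', hc', hgc'⟩)
        (fun c' d => ?_) (fun c' hc' hne' => ?_)
        (h.substConsts_update hg hcS hgc (hf.notMem hcS hfc))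
      · by_cases hc' : c' = c
        · subst hc'
          simp [hfc]
        · simp [Function.update_of_ne hc', hfg]
      · have hc'c : c' ≠ c := by rintro rfl; simp [hfc] at hne'
        rw [Function.update_of_ne hc'c] at hne'
        obtain ⟨hmem, hgh⟩ := hdiff c' hc' hne'
        refine ⟨(Finset.mem_insert.1 hmem).resolve_left hc'c, fun v' hfc' ⟨c'', hc'', h''⟩ => ?_⟩
        by_cases hc''c : c'' = c
        · subst hc''c
          simp only [Function.update_self, Sum.inl.injEq] at h''
          exact hc'c (hf.injOn hc' hcS hfc' (h'' ▸ hfc))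
        · exact hgh v' hfc' ⟨c'', hc'', by rwa [Function.update_of_ne hc''c] at h''⟩
    · refine ih g hg hfg (fun c' hc' hne' => ⟨?_, (hdiff c' hc' hne').2⟩) h
      rcases Finset.mem_insert.1 (hdiff c' hc' hne').1 with rfl | hmem
      exacts [absurd ⟨hc', hne'⟩ hc, hmem]

theorem substConsts_of_agree (hf : FreshOn f (A.consts ∪ B.consts) (A.vars ∪ B.vars))
    (hg : FreshOn g (A.consts ∪ B.consts) (A.vars ∪ B.vars ∪ ghosts f (A.consts ∪ B.consts)))
    (hfg : ∀ c d, f c = .inr d ↔ g c = .inr d) (h : Der (A.substConsts g) (B.substConsts g)) :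
    Der (A.substConsts f) (B.substConsts f) := by
  classical
  have hfin := A.consts_finite.union B.consts_finite
  refine substConsts_of_agree_outside hf hfin.toFinset g (hg.mono le_rfl Set.subset_union_left) hfg
    (fun c hc _ => ⟨hfin.mem_toFinset.2 hc, fun v hfc ⟨c', hc', hgc'⟩ => ?_⟩) h
  exact hg.notMem hc' hgc' (Or.inr ⟨c, hc, hfc⟩)

theorem substConsts_of_refresh {S : Set Cst} {V : Set ℕ}
    (hf : FreshOn f (A.consts ∪ B.consts) (A.vars ∪ B.vars)) (hS : S.Finite) (hV : V.Finite)
    (hSsub : A.consts ∪ B.consts ⊆ S)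
    (hVsub : A.vars ∪ B.vars ∪ ghosts f (A.consts ∪ B.consts) ⊆ V)
    (h : ∀ g : Cst → ℕ ⊕ Cst', (∀ c d, f c = .inr d ↔ g c = .inr d) → FreshOn g S V →
      Der (A.substConsts g) (B.substConsts g)) :
    Der (A.substConsts f) (B.substConsts f) := by
  obtain ⟨g, hfg, hg⟩ := exists_freshOn hS hV f
  exact substConsts_of_agree hf (hg.mono hSsub hVsub) hfg (h g hfg hg)

end Der

variable (Cst') in
def FreshInstancesDer (A B : Fml Cst Rl ar) : Prop :=
  ∀ f : Cst → ℕ ⊕ Cst', FreshOn f (A.consts ∪ B.consts) (A.vars ∪ B.vars) →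
    Der (A.substConsts f) (B.substConsts f)

namespace FreshInstancesDer

variable {φ ψ χ : Fml Cst Rl ar} {x : ℕ}

theorem andI (ih₁ : FreshInstancesDer Cst' φ ψ) (ih₂ : FreshInstancesDer Cst' φ χ) :
    FreshInstancesDer Cst' φ (.and ψ χ) := fun f hf =>
  .andI (ih₁ f (hf.mono (by grind [consts]) (by grind [vars])))
    (ih₂ f (hf.mono (by grind [consts]) (by grind [vars])))

theorem cut (ih₁ : FreshInstancesDer Cst' φ ψ) (ih₂ : FreshInstancesDer Cst' ψ χ) :
    FreshInstancesDer Cst' φ χ := fun f hf =>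
  Der.substConsts_of_refresh hf (S := φ.consts ∪ ψ.consts ∪ χ.consts)
    (V := φ.vars ∪ ψ.vars ∪ χ.vars ∪ ghosts f (φ.consts ∪ χ.consts)) (by simp) (by simp)
    (by grind) (by grind) fun g _ hg =>
  (ih₁ g (hg.mono (by grind) (by grind))).cut (ih₂ g (hg.mono (by grind) (by grind)))

theorem allI (ih : FreshInstancesDer Cst' φ ψ) (hx : x ∉ φ.fv) :
    FreshInstancesDer Cst' φ (.all x ψ) := fun f hf => by
  refine Der.allI x (ih f (hf.mono le_rfl (by grind [vars]))) fun hmem => ?_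
  rcases fv_substConsts_subset φ hmem with h | h
  exacts [hx h, hf.notMem_ghosts (Or.inr (Set.mem_insert x _)) Set.subset_union_left h]

theorem allE {t : ℕ ⊕ Cst} (ih : FreshInstancesDer Cst' (φ.subst x t) ψ) (ht : FreeFor t x φ) :
    FreshInstancesDer Cst' (.all x φ) ψ := fun f hf => by
  have hc := consts_subst_subset φ x t
  have hv := vars_subst_subset φ x t
  refine Der.substConsts_of_refresh hf (S := φ.consts ∪ ψ.consts ∪ Sum.inr ⁻¹' {t})
    (V := φ.vars ∪ ψ.vars ∪ Sum.inl ⁻¹' {t} ∪ {x} ∪ ghosts f ((all x φ).consts ∪ ψ.consts))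
    (by simp) (by simp) (by grind [consts]) (by grind [vars]) fun g _ hg => ?_
  have h := ih g (hg.mono (by grind) (by grind))
  rw [substConsts_subst t (hg.notMem_ghosts (by simp) (by grind))] at h
  exact Der.allE x _ h (hg.freeFor_substConsts ht (by grind) (by grind))

theorem inst {t : ℕ ⊕ Cst} (ih : FreshInstancesDer Cst' φ ψ) (hφ : FreeFor t x φ)
    (hψ : FreeFor t x ψ) : FreshInstancesDer Cst' (φ.subst x t) (ψ.subst x t) := fun f hf => by
  refine Der.substConsts_of_refresh hf (S := φ.consts ∪ ψ.consts ∪ Sum.inr ⁻¹' {t})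
    (V := φ.vars ∪ ψ.vars ∪ Sum.inl ⁻¹' {t} ∪ {x} ∪
      ghosts f ((φ.subst x t).consts ∪ (ψ.subst x t).consts))
    (by simp) (by simp) ?_ ?_ fun g _ hg => ?_
  · have := consts_subst_subset φ x t
    have := consts_subst_subset ψ x t
    grind
  · have := vars_subst_subset φ x t
    have := vars_subst_subset ψ x t
    grind
  rw [substConsts_subst t (hg.notMem_ghosts (by simp) (by grind)),
    substConsts_subst t (hg.notMem_ghosts (by simp) (by grind))]
  exact (ih g (hg.mono (by grind) (by grind))).inst x _
    (hg.freeFor_substConsts hφ (by grind) (by grind))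
    (hg.freeFor_substConsts hψ (by grind) (by grind))

theorem genC {c : Cst} (ih : FreshInstancesDer Cst' (φ.subst x (.inr c)) (ψ.subst x (.inr c)))
    (hφ : c ∉ φ.consts) (hψ : c ∉ ψ.consts) : FreshInstancesDer Cst' φ ψ := fun f hf => by
  classical
  -- `c` must be sent to a variable, which `f` need not do
  set f₁ := Function.update f c (.inl 0)
  have heq : Set.EqOn f₁ f (φ.consts ∪ ψ.consts) := fun c' hc' =>
    Function.update_of_ne (by rintro rfl; grind) _ _
  rw [← substConsts_congr (heq.mono Set.subset_union_left),
    ← substConsts_congr (heq.mono Set.subset_union_right)]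
  refine Der.substConsts_of_refresh (hf.congr heq.symm) (S := φ.consts ∪ ψ.consts ∪ {c})
    (V := φ.vars ∪ ψ.vars ∪ {x} ∪ ghosts f₁ (φ.consts ∪ ψ.consts)) (by simp) (by simp)
    (by grind) (by grind) fun g hfg hg => ?_
  obtain ⟨v, hgc⟩ : ∃ v, g c = .inl v := by
    rcases hgc : g c with v | d
    exacts [⟨v, rfl⟩, absurd ((hfg c d).2 hgc) (by simp [f₁])]
  have hvφ := hg.notMem_vars_substConsts (by simp) hgc (by grind) hφ (by grind)
  have hvψ := hg.notMem_vars_substConsts (by simp) hgc (by grind) hψ (by grind)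
  have h := ih g (hg.mono (by grind [consts_subst_subset]) (by grind [vars_subst_subset]))
  rw [substConsts_subst _ (hg.notMem_ghosts (by simp) (by grind)),
    substConsts_subst _ (hg.notMem_ghosts (by simp) (by grind)), Sum.elim_inr, hgc] at h
  have := h.inst v (.inl x) (freeFor_subst_cancel hvφ) (freeFor_subst_cancel hvψ)
  rwa [subst_subst_cancel hvφ, subst_subst_cancel hvψ] at this

end FreshInstancesDer

theorem Der.freshInstancesDer {A B : Fml Cst Rl ar} (h : Der A B) : FreshInstancesDer Cst' A B := by
  induction h with
  | top φ => exact fun f _ => .top _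
  | refl φ => exact fun f _ => .refl _
  | andE1 φ ψ => exact fun f _ => .andE1 _ _
  | andE2 φ ψ => exact fun f _ => .andE2 _ _
  | andI _ _ ih₁ ih₂ => exact ih₁.andI ih₂
  | cut _ _ ih₁ ih₂ => exact ih₁.cut ih₂
  | diaMono _ ih => exact fun f hf => (ih f hf).diaMono
  | diaTrans φ => exact fun f _ => .diaTrans _
  | allI x _ hx ih => exact ih.allI hx
  | allE x t _ ht ih => exact ih.allE ht
  | inst x t _ hφ hψ ih => exact ih.inst hφ hψ
  | genC x c _ hφ hψ ih => exact ih.genC hφ hψ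

theorem signature_extension (Cst C Rl : Type) (ar : Rl → ℕ)
    (φ ψ : Fml Cst Rl ar)
    (h : Der (φ.mapC (Sum.inl : Cst → Cst ⊕ C)) (ψ.mapC (Sum.inl : Cst → Cst ⊕ C))) :
    Der φ ψ := by
  have hf := h.freshInstancesDer (Sum.elim .inr fun _ => .inl 0 : Cst ⊕ C → ℕ ⊕ Cst)
    (.of_forall_inr ?_)
  · simpa [substConsts_mapC] using hf
  rintro _ (hc | hc) <;>
  · obtain ⟨d, -, rfl⟩ := consts_mapC Sum.inl _ ▸ hc
    exact ⟨d, rfl⟩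

end QRC1
end

section
/- Relational soundness of QRC₁: if the sequent φ ⊢ ψ is derivable in QRC₁, then for every adequate relational model M, every world w of M, and every w-assignment g, if M, w ⊩^g φ then M, w ⊩^g ψ. -/
namespace QRC1

/-!
Soundness is proved rule by rule. Quantifier elimination and instantiation rest on the
substitution lemma, whose modal case needs concordance: values of terms commute with the
maps `η`. For generalization on constants, given `M, w ⊩^g φ`, restrict `M` to the worlds
seen from a fresh copy of `w` and reinterpret `c` there as `g x` and at every later world `v`
as `η_{w,v} (g x)`. The new model is adequate because the `η` maps compose, it agrees with `M`
on formulas without `c`, and at the root `φ[x/c]` holds under `g` iff `φ` does.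
-/

theorem forall_agree_update_iff {α β : Type*} [DecidableEq α] {P : (α → β) → Prop}
    {g : α → β} {x y : α} (hxy : x ≠ y) (a : β) :
    (∀ h : α → β, (∀ z, z ≠ y → h z = Function.update g x a z) → P h) ↔
      ∀ h : α → β, (∀ z, z ≠ y → h z = g z) → P (Function.update h x a) := by
  constructor
  · intro H h hh
    refine H _ fun z hz => ?_
    by_cases hzx : z = x
    · subst hzx; simp
    · simp [hzx, hh z hz]
  · intro H h hh
    have hhx : h x = a := by simpa using hh x hxy
    have hupd := H (Function.update h x (g x)) fun z hz => by
      by_cases hzx : z = x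
      · subst hzx; simp
      · simpa [hzx] using hh z hz
    rwa [Function.update_idem, ← hhx, Function.update_eq_self] at hupd

namespace Fml

variable {Cst Rl : Type} {ar : Rl → ℕ}

theorem subst_eq_self_of_not_mem_fv {φ : Fml Cst Rl ar} {x : ℕ} (t : ℕ ⊕ Cst)
    (hx : x ∉ φ.fv) : φ.subst x t = φ := by
  induction φ with
  | top => rfl
  | rel S ts =>
    refine congrArg (rel S) (funext fun i => ?_)
    rcases hi : ts i with y | c
    · have hyx : y ≠ x := by rintro rfl; exact hx ⟨i, hi⟩
      simp [substT, hyx]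
    · rfl
  | and φ ψ ihφ ihψ =>
    simp only [fv, Set.mem_union, not_or] at hx
    simp [subst, ihφ hx.1, ihψ hx.2]
  | dia φ ih => simp [subst, ih hx]
  | all y φ ih =>
    by_cases hyx : y = x
    · simp [subst, hyx]
    · have hx' : x ∉ φ.fv := fun hxφ => hx ⟨hxφ, Ne.symm hyx⟩
      simp [subst, hyx, ih hx']

theorem freeFor_inr (c : Cst) (x : ℕ) (φ : Fml Cst Rl ar) : FreeFor (.inr c) x φ := by
  induction φ with
  | top | rel => trivial
  | and _ _ ihφ ihψ => exact ⟨ihφ, ihψ⟩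
  | dia _ ih => exact ih
  | all _ _ ih => exact Or.inr ⟨Sum.inr_ne_inl, ih⟩

end Fml

namespace Model

variable {Cst Rl : Type} {ar : Rl → ℕ} {M : Model Cst Rl ar}

open Function

theorem tval_eta (hM : M.Adequate) {w v : M.W} (h : M.R w v) (g : ℕ → M.Dom w)
    (t : ℕ ⊕ Cst) : M.tval (M.η w v h ∘ g) t = M.η w v h (M.tval g t) := by
  cases t with
  | inl => rfl
  | inr c => exact hM.concord h c

theorem sat_of_eqOn {φ : Fml Cst Rl ar} {w : M.W} {g g' : ℕ → M.Dom w}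
    (hg : Set.EqOn g g' φ.fv) (hφ : M.Sat w g φ) : M.Sat w g' φ := by
  induction φ generalizing w with
  | top => trivial
  | rel S ts =>
    have hts : (fun i => M.tval g (ts i)) = fun i => M.tval g' (ts i) := by
      funext i
      rcases hi : ts i with y | c
      · exact hg ⟨i, hi⟩
      · rfl
    simpa only [Sat, hts] using hφ
  | and φ ψ ihφ ihψ =>
    exact ⟨ihφ (hg.mono Set.subset_union_left) hφ.1,
      ihψ (hg.mono Set.subset_union_right) hφ.2⟩
  | dia φ ih =>
    obtain ⟨v, hv, hφ⟩ := hφ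
    exact ⟨v, hv, ih (fun z hz => congrArg (M.η w v hv) (hg hz)) hφ⟩
  | all y φ ih =>
    intro h hh
    refine ih (g := update g y (h y)) (fun z hz => ?_) (hφ _ fun _ hz => update_of_ne hz _ _)
    by_cases hzy : z = y
    · subst hzy; simp
    · rw [update_of_ne hzy, hg ⟨hz, hzy⟩, hh z hzy]

theorem sat_congr {φ : Fml Cst Rl ar} {w : M.W} {g g' : ℕ → M.Dom w}
    (hg : Set.EqOn g g' φ.fv) : M.Sat w g φ ↔ M.Sat w g' φ :=
  ⟨sat_of_eqOn hg, sat_of_eqOn hg.symm⟩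

theorem sat_update_of_not_mem_fv {φ : Fml Cst Rl ar} {x : ℕ} (hx : x ∉ φ.fv) {w : M.W}
    (g : ℕ → M.Dom w) (a : M.Dom w) : M.Sat w (update g x a) φ ↔ M.Sat w g φ :=
  sat_congr fun _ hz => update_of_ne (ne_of_mem_of_not_mem hz hx) _ _

theorem sat_subst (hM : M.Adequate) {φ : Fml Cst Rl ar} {x : ℕ} {t : ℕ ⊕ Cst}
    (hf : φ.FreeFor t x) {w : M.W} (g : ℕ → M.Dom w) :
    M.Sat w g (φ.subst x t) ↔ M.Sat w (update g x (M.tval g t)) φ := by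
  induction φ generalizing w with
  | top => rfl
  | rel S ts =>
    have hts : (fun i => M.tval g (Fml.substT x t (ts i))) =
        fun i => M.tval (update g x (M.tval g t)) (ts i) := by
      funext i
      rcases ts i with y | c
      · by_cases hyx : y = x
        · subst hyx; simp [Fml.substT, tval]
        · simp [Fml.substT, hyx, tval]
      · rfl
    simp only [Fml.subst, Sat, hts]
  | and φ ψ ihφ ihψ => exact and_congr (ihφ hf.1 g) (ihψ hf.2 g)
  | dia φ ih =>
    refine exists_congr fun v => exists_congr fun hv => ?_
    rw [show (fun n => M.η w v hv (g n)) = M.η w v hv ∘ g from rfl, ih hf, tval_eta hM,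
      ← comp_update]
    rfl
  | all y φ ih =>
    by_cases hx : x ∈ (Fml.all y φ).fv
    · obtain ⟨hxφ, hxy⟩ := hx
      obtain ⟨hty, hf⟩ := hf.resolve_left (not_not.mpr ⟨hxφ, hxy⟩)
      simp only [Fml.subst, if_neg (Ne.symm hxy), Sat]
      rw [forall_agree_update_iff hxy]
      refine forall₂_congr fun h hh => ?_
      have htval : M.tval h t = M.tval g t := by
        cases t with
        | inl u => exact hh u fun huy => hty (congrArg Sum.inl huy)
        | inr => rfl
      rw [ih hf, htval]
    · rw [Fml.subst_eq_self_of_not_mem_fv t hx, sat_update_of_not_mem_fv hx]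

theorem sat_subst_inr_iff (hM : M.Adequate) {φ : Fml Cst Rl ar} {x : ℕ} {c : Cst}
    {w : M.W} {g : ℕ → M.Dom w} (hc : M.I w c = g x) :
    M.Sat w g (φ.subst x (.inr c)) ↔ M.Sat w g φ := by
  rw [sat_subst hM (Fml.freeFor_inr c x φ), tval, hc, update_eq_self]

/-- The submodel generated by a fresh copy `none` of `w`; the copy is needed because `w` may
be `R`-above itself. -/
def rootedAt (M : Model Cst Rl ar) (w : M.W) : Model Cst Rl ar where
  W := Option {v : M.W // M.R w v}
  R
    | _, none => False
    | none, some _ => True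
    | some u, some v => M.R u v
  Dom a := M.Dom (a.elim w Subtype.val)
  finDom _ := M.finDom _
  η
    | none, some v, _ => M.η w v v.2
    | some u, some v, h => M.η u v h
  I a := M.I (a.elim w Subtype.val)
  J a := M.J (a.elim w Subtype.val)

theorem rootedAt_adequate (hM : M.Adequate) (w : M.W) : (M.rootedAt w).Adequate where
  trans := by
    rintro (_ | u) (_ | v) (_ | v') huv hvv' <;>
      first | exact huv.elim | exact hvv'.elim | trivial | exact hM.trans huv hvv'
  etaTrans := by
    rintro (_ | u) (_ | v) (_ | v') huv hvv' huv' <;>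
      first
      | exact huv.elim
      | exact hvv'.elim
      | exact hM.etaTrans v.2 hvv' v'.2
      | exact hM.etaTrans huv hvv' huv'
  concord := by
    rintro (_ | u) (_ | v) huv c <;>
      first | exact huv.elim | exact hM.concord v.2 c | exact hM.concord huv c

theorem rootedAt_sat (hM : M.Adequate) (w : M.W) (φ : Fml Cst Rl ar)
    (a : (M.rootedAt w).W) (g : ℕ → (M.rootedAt w).Dom a) :
    (M.rootedAt w).Sat a g φ ↔ M.Sat (a.elim w Subtype.val) g φ := by
  induction φ generalizing a with
  | top | rel => rfl
  | and φ ψ ihφ ihψ => exact and_congr (ihφ a g) (ihψ a g)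
  | dia φ ih =>
    constructor
    · rintro ⟨_ | v, hav, hφ⟩
      · cases a <;> exact hav.elim
      · cases a with
        | none => exact ⟨v, v.2, (ih _ _).mp hφ⟩
        | some u => exact ⟨v, hav, (ih _ _).mp hφ⟩
    · rintro ⟨v, hav, hφ⟩
      cases a with
      | none => exact ⟨some ⟨v, hav⟩, trivial, (ih _ _).mpr hφ⟩
      | some u => exact ⟨some ⟨v, hM.trans u.2 hav⟩, hav, (ih _ _).mpr hφ⟩
  | all y φ ih => exact forall₂_congr fun h _ => ih a h

def withConst [DecidableEq Cst] (M : Model Cst Rl ar) (c : Cst) (e : ∀ w, M.Dom w) :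
    Model Cst Rl ar :=
  { M with I := fun w => update (M.I w) c (e w) }

theorem withConst_adequate [DecidableEq Cst] (hM : M.Adequate) (c : Cst) {e : ∀ w, M.Dom w}
    (he : ∀ {w u : M.W} (h : M.R w u), e u = M.η w u h (e w)) :
    (M.withConst c e).Adequate where
  trans := hM.trans
  etaTrans := hM.etaTrans
  concord h c' := by
    by_cases hc : c' = c
    · subst hc; simpa [withConst] using he h
    · simpa [withConst, hc] using hM.concord h c'

theorem withConst_sat [DecidableEq Cst] {c : Cst} (e : ∀ w, M.Dom w) {φ : Fml Cst Rl ar} (hc : c ∉ φ.consts)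
    (w : M.W) (g : ℕ → M.Dom w) : (M.withConst c e).Sat w g φ ↔ M.Sat w g φ := by
  induction φ generalizing w with
  | top => rfl
  | rel S ts =>
    have hts : (fun i => (M.withConst c e).tval g (ts i)) = fun i => M.tval g (ts i) := by
      funext i
      rcases hi : ts i with y | c'
      · rfl
      · have hc' : c' ≠ c := by rintro rfl; exact hc ⟨i, hi⟩
        simp [tval, withConst, hc']
    simp only [Sat, hts]
    rfl
  | and φ ψ ihφ ihψ =>
    simp only [Fml.consts, Set.mem_union, not_or] at hc
    exact and_congr (ihφ hc.1 w g) (ihψ hc.2 w g)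
  | dia φ ih => exact exists_congr fun v => exists_congr fun _ => ih hc v _
  | all y φ ih => exact forall₂_congr fun h _ => ih hc w h

end Model

section Soundness

variable {Cst Rl : Type} {ar : Rl → ℕ}

def Valid (φ ψ : Fml Cst Rl ar) : Prop :=
  ∀ (M : Model Cst Rl ar), M.Adequate → ∀ (w : M.W) (g : ℕ → M.Dom w), M.Sat w g φ → M.Sat w g ψ

theorem valid_diaTrans (φ : Fml Cst Rl ar) : Valid (.dia (.dia φ)) (.dia φ) := by
  rintro M hM w g ⟨v, hwv, u, hvu, hφ⟩
  refine ⟨u, hM.trans hwv hvu, ?_⟩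
  rwa [hM.etaTrans hwv hvu (hM.trans hwv hvu)]

theorem Valid.allI {φ ψ : Fml Cst Rl ar} {x : ℕ} (h : Valid φ ψ) (hx : x ∉ φ.fv) :
    Valid φ (.all x ψ) := fun M hM w _ hφ g' hg' =>
  h M hM w g' (Model.sat_of_eqOn (fun z hz => (hg' z (ne_of_mem_of_not_mem hz hx)).symm) hφ)

theorem Valid.allE {φ ψ : Fml Cst Rl ar} {x : ℕ} {t : ℕ ⊕ Cst} (h : Valid (φ.subst x t) ψ)
    (ht : φ.FreeFor t x) : Valid (.all x φ) ψ := fun M hM w g hφ =>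
  h M hM w g ((Model.sat_subst hM ht g).mpr (hφ _ fun _ hz => Function.update_of_ne hz _ _))

theorem Valid.inst {φ ψ : Fml Cst Rl ar} {x : ℕ} {t : ℕ ⊕ Cst} (h : Valid φ ψ)
    (hφ : φ.FreeFor t x) (hψ : ψ.FreeFor t x) : Valid (φ.subst x t) (ψ.subst x t) :=
  fun M hM w g hφt =>
    (Model.sat_subst hM hψ g).mpr (h M hM w _ ((Model.sat_subst hM hφ g).mp hφt))

theorem Valid.genC {φ ψ : Fml Cst Rl ar} {x : ℕ} {c : Cst}
    (h : Valid (φ.subst x (.inr c)) (ψ.subst x (.inr c))) (hφ : c ∉ φ.consts)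
    (hψ : c ∉ ψ.consts) : Valid φ ψ := by
  intro M hM w g hφw
  classical
  let e : ∀ a : (M.rootedAt w).W, (M.rootedAt w).Dom a
    | none => g x
    | some v => M.η w v v.2 (g x)
  have he : ∀ {a b} (hab : (M.rootedAt w).R a b), e b = (M.rootedAt w).η a b hab (e a) := by
    rintro (_ | u) (_ | v) huv
    · exact huv.elim
    · rfl
    · exact huv.elim
    · exact congrFun (hM.etaTrans u.2 huv v.2) (g x)
  let M' := (M.rootedAt w).withConst c e
  have hM' : M'.Adequate := Model.withConst_adequate (Model.rootedAt_adequate hM w) c he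
  have hcx : M'.I none c = g x := by
    change Function.update ((M.rootedAt w).I none) c (e none) c = e none
    exact Function.update_self ..
  have hφ' : M'.Sat none g φ :=
    (Model.withConst_sat e hφ none g).mpr ((Model.rootedAt_sat hM w φ none g).mpr hφw)
  have hψ' := (Model.sat_subst_inr_iff hM' hcx).mp
    (h M' hM' none g ((Model.sat_subst_inr_iff hM' hcx).mpr hφ'))
  exact (Model.rootedAt_sat hM w ψ none g).mp ((Model.withConst_sat e hψ none g).mp hψ')

end Soundness

theorem relational_soundness (Cst Rl : Type) (ar : Rl → ℕ) (φ ψ : Fml Cst Rl ar)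
    (h : Der φ ψ) :
    ∀ (M : Model Cst Rl ar), M.Adequate →
      ∀ (w : M.W) (g : ℕ → M.Dom w), M.Sat w g φ → M.Sat w g ψ := by
  induction h with
  | top => exact fun _ _ _ _ _ => trivial
  | refl => exact fun _ _ _ _ => id
  | andE1 => exact fun _ _ _ _ hφψ => hφψ.1
  | andE2 => exact fun _ _ _ _ hφψ => hφψ.2
  | andI _ _ ih₁ ih₂ => exact fun M hM w g hφ => ⟨ih₁ M hM w g hφ, ih₂ M hM w g hφ⟩
  | cut _ _ ih₁ ih₂ => exact fun M hM w g hφ => ih₂ M hM w g (ih₁ M hM w g hφ)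
  | diaMono _ ih => exact fun M hM w g ⟨v, hv, hφ⟩ => ⟨v, hv, ih M hM v _ hφ⟩
  | diaTrans φ => exact valid_diaTrans φ
  | allI _ _ hx ih => exact Valid.allI ih hx
  | allE _ _ _ ht ih => exact Valid.allE ih ht
  | inst _ _ _ hφ hψ ih => exact Valid.inst ih hφ hψ
  | genC _ _ _ hφ hψ ih => exact Valid.genC ih hφ hψ

end QRC1
end
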